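/- Let G be a digraph with a global sink. For any two acyclic rotor configurations ρ and ρ' on G, there exists a chip configuration σ on G such that σ(ρ) = ρ'. -/

import Mathlib

/-!
Fire each non-sink vertex `v` exactly `n v` times, where `n v` is congruent, modulo the period
`p v` of its rotor, to the number `k v` of turns taking `ρ v` to `ρ' v`: the rotors then end at
`ρ'`, and the chips to start with are `σ = n - (chips received)`. Writing `n = p * m + k`,
`σ ≥ 0` follows from `(diag p - dᵀ) m ≥ ∑ k` over `ℕ`, where `d u v` counts the chips `u`
sends to `v` during one full turn of its rotor. Every vertex reaches the sink, so there are
weights `x` with `(diag p - d) x > 0` (dropping geometrically towards the sink); with `x` as a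
potential, repeatedly raising a deficient coordinate of `m` terminates.

The firings can be scheduled legally because `ρ'` is acyclic: if every unfinished vertex were
empty, the remaining firings would send all their chips back into the unfinished vertices, so the
last rotor position of each of them, its `ρ'`-edge, would point into that set, closing a cycle.
-/

/-- The out-degree of a vertex. -/
def outdeg {V E : Type} [Fintype E] [DecidableEq V] (tail : E → V) (v : V) : ℕ :=
  (Finset.univ.filter (fun e => tail e = v)).card

/-- The vertices other than the (global) sink `s`. -/
abbrev Vne {V : Type} (s : V) : Type := {v : V // v ≠ s}

/-- Rotor configurations on the non-sink vertices. -/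
abbrev RotorConfig {V E : Type} (tail : E → V) (s : V) : Type :=
  {ρ : Vne s → E // ∀ v, tail (ρ v) = v.1}

/-- A chip-and-rotor state. -/
abbrev CRState {V E : Type} (tail : E → V) (s : V) : Type :=
  (Vne s → ℕ) × RotorConfig tail s

/-- Firing the non-sink vertex `v` in a chip-and-rotor state: the rotor at `v` advances
to the next edge and one chip moves from `v` along it (disappearing at the sink). -/
def crFire {V E : Type} [DecidableEq V] {s : V} (tail head : E → V) (next : E → E)
    (hnext : ∀ e, tail (next e) = tail e)
    (τ : CRState tail s) (v : Vne s) : CRState tail s :=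
  (fun u => (τ.1 u - if u = v then 1 else 0) +
      if u.1 = head (next (τ.2.1 v)) then 1 else 0,
   ⟨Function.update τ.2.1 v (next (τ.2.1 v)), by
      intro u
      rcases eq_or_ne u v with h | h
      · rw [h, Function.update_self, hnext]
        exact τ.2.2 v
      · rw [Function.update_of_ne h]
        exact τ.2.2 u⟩)

/-- A non-sink vertex is active when it holds a chip. -/
def crActive {V E : Type} {s : V} (tail : E → V) (τ : CRState tail s) (v : Vne s) : Prop :=
  1 ≤ τ.1 v

/-- The result of firing the vertices in the list `l` in order. -/
def crFireList {V E : Type} [DecidableEq V] {s : V} (tail head : E → V) (next : E → E)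
    (hnext : ∀ e, tail (next e) = tail e)
    (τ : CRState tail s) : List (Vne s) → CRState tail s
  | [] => τ
  | v :: l => crFireList tail head next hnext (crFire tail head next hnext τ v) l

/-- The firing sequence `l` is legal from `τ`. -/
def crLegal {V E : Type} [DecidableEq V] {s : V} (tail head : E → V) (next : E → E)
    (hnext : ∀ e, tail (next e) = tail e)
    (τ : CRState tail s) : List (Vne s) → Prop
  | [] => True
  | v :: l => crActive tail τ v ∧ crLegal tail head next hnext (crFire tail head next hnext τ v) l

/-- `σ(ρ) = ρ'`: starting with chips `σ` and rotors `ρ`, all chips can be routed to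
the sink by a legal firing sequence, leaving the rotor configuration `ρ'`. -/
def RoutesAll {V E : Type} [DecidableEq V] {s : V} (tail head : E → V) (next : E → E)
    (hnext : ∀ e, tail (next e) = tail e)
    (σ : Vne s → ℕ) (ρ ρ' : RotorConfig tail s) : Prop :=
  ∃ l : List (Vne s), crLegal tail head next hnext (σ, ρ) l ∧
    (∀ v, (crFireList tail head next hnext (σ, ρ) l).1 v = 0) ∧
    (crFireList tail head next hnext (σ, ρ) l).2 = ρ'

/-- The vertex-successor map of a rotor configuration (fixing the sink). -/
def rotorSucc {V E : Type} [DecidableEq V] (tail head : E → V) (s : V)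
    (ρ : RotorConfig tail s) : V → V :=
  fun u => if h : u = s then u else head (ρ.1 ⟨u, h⟩)

/-- A rotor configuration is acyclic when its edges contain no directed cycle. -/
def RAcyclic {V E : Type} [DecidableEq V] (tail head : E → V) (s : V)
    (ρ : RotorConfig tail s) : Prop :=
  ∀ (v : Vne s) (k : ℕ), 0 < k → (rotorSucc tail head s ρ)^[k] v.1 ≠ v.1

open Finset Function

section Weights

lemma exists_rank_of_forall_reflTransGen {α : Type*} {r : α → α → Prop} {P : α → Prop}
    (h : ∀ a, ∃ b, Relation.ReflTransGen r a b ∧ P b) :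
    ∃ ℓ : α → ℕ, ∀ a, P a ∨ ∃ b, r a b ∧ ℓ b < ℓ a := by
  classical
  let grow : Set α → Set α := fun S => S ∪ {a | ∃ b ∈ S, r a b}
  have hreach : ∀ a, ∃ k, a ∈ grow^[k] {b | P b} := by
    intro a
    obtain ⟨b, hab, hb⟩ := h a
    induction hab using Relation.ReflTransGen.head_induction_on with
    | refl => exact ⟨0, hb⟩
    | head hac _ ih =>
      obtain ⟨k, hk⟩ := ih
      exact ⟨k + 1, by rw [iterate_succ_apply']; exact Or.inr ⟨_, hk, hac⟩⟩
  refine ⟨fun a => Nat.find (hreach a), fun a => ?_⟩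
  have hmem := Nat.find_spec (hreach a)
  by_cases hk : Nat.find (hreach a) = 0
  · rw [hk] at hmem
    exact Or.inl hmem
  · obtain ⟨j, hj⟩ := Nat.exists_eq_succ_of_ne_zero hk
    rw [hj, iterate_succ_apply'] at hmem
    rcases hmem with hmem | ⟨b, hb, hab⟩
    · exact absurd hmem (Nat.find_min (hreach a) (by omega))
    · have := Nat.find_min' (hreach b) hb
      exact Or.inr ⟨b, hab, by dsimp only; omega⟩

variable {ι : Type} [Fintype ι]

lemma exists_row_weights (c : ι → ℕ) (d : ι → ι → ℕ) (hrow : ∀ u, ∑ v, d u v ≤ c u)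
    (hleak : ∀ u, ∃ w, Relation.ReflTransGen (fun a b => 1 ≤ d a b) u w ∧ ∑ v, d w v < c w) :
    ∃ x : ι → ℕ, ∀ u, ∑ v, d u v * x v < c u * x u := by
  obtain ⟨ℓ, hℓ⟩ := exists_rank_of_forall_reflTransGen hleak
  set H := univ.sup ℓ
  set C := univ.sup c + 2
  have hcC (u : ι) : c u < C := Nat.lt_of_le_of_lt (le_sup (mem_univ u)) (by omega)
  have hC : 2 ≤ C := Nat.le_add_left 2 _
  have hℓH (u : ι) : ℓ u ≤ H := le_sup (mem_univ u)
  -- `x = A - P`, where `P` grows by a factor `C > c u` at each step towards a leak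
  obtain ⟨A, hA⟩ : ∃ A, A = C ^ (H + 1) := ⟨_, rfl⟩
  set P : ι → ℕ := fun u => C ^ (H - ℓ u)
  have hPH (u : ι) : P u ≤ C ^ H := Nat.pow_le_pow_right (by omega) (by omega)
  have hPA (u : ι) : P u ≤ A := hA ▸ (hPH u).trans (Nat.pow_le_pow_right (by omega) (by omega))
  have hcPA (u : ι) : c u * P u < A :=
    calc c u * P u ≤ c u * C ^ H := Nat.mul_le_mul_left _ (hPH u)
      _ < C * C ^ H := Nat.mul_lt_mul_of_pos_right (hcC u) (by positivity)
      _ = A := by rw [hA]; ring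
  refine ⟨fun u => A - P u, fun u => ?_⟩
  dsimp only
  have hsplit : ∑ v, d u v * (A - P v) + ∑ v, d u v * P v = A * ∑ v, d u v := by
    rw [← sum_add_distrib, mul_sum]
    refine sum_congr rfl fun v _ => ?_
    rw [← mul_add, Nat.sub_add_cancel (hPA v), mul_comm]
  have hrowA : A * ∑ v, d u v ≤ A * c u := Nat.mul_le_mul_left _ (hrow u)
  rw [Nat.mul_sub, mul_comm (c u) A]
  rcases hℓ u with hleaky | ⟨v, hv, hℓv⟩
  · have : A * ∑ v, d u v + A ≤ A * c u := by
      rw [← Nat.mul_add_one]; exact Nat.mul_le_mul_left _ hleaky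
    have := hcPA u
    omega
  · have hPv : C * P u ≤ P v := by
      rw [← pow_succ']; exact Nat.pow_le_pow_right (by omega) (by have := hℓH u; omega)
    have hSP : P v ≤ ∑ w, d u w * P w :=
      (Nat.le_mul_of_pos_left _ hv).trans
        (single_le_sum (f := fun w => d u w * P w) (fun w _ => Nat.zero_le _) (mem_univ v))
    have : c u * P u < C * P u :=
      Nat.mul_lt_mul_of_pos_right (hcC u) (by positivity)
    omega

def colSlack (c : ι → ℕ) (d : ι → ι → ℕ) (m : ι → ℕ) (v : ι) : ℤ :=
  c v * m v - ∑ u, (d u v : ℤ) * m u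

lemma colSlack_add_single [DecidableEq ι] (c : ι → ℕ) (d : ι → ι → ℕ) (m : ι → ℕ) (v w : ι) :
    colSlack c d (m + Pi.single v 1) w =
      colSlack c d m w + (if w = v then (c v : ℤ) else 0) - d v w := by
  simp only [colSlack, Pi.add_apply, Nat.cast_add, mul_add, sum_add_distrib, Pi.single_apply,
    Nat.cast_ite, Nat.cast_one, Nat.cast_zero, mul_ite, mul_one, mul_zero, sum_ite_eq', mem_univ,
    if_true]
  split_ifs with h
  · subst h; ring
  · ring

lemma sum_mul_colSlack_add_single [DecidableEq ι] (c : ι → ℕ) (d : ι → ι → ℕ) (x m : ι → ℕ)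
    (v : ι) : ∑ w, (x w : ℤ) * colSlack c d (m + Pi.single v 1) w =
      ∑ w, (x w : ℤ) * colSlack c d m w + (c v * x v - ∑ w, (d v w : ℤ) * x w) := by
  simp only [colSlack_add_single, mul_sub, mul_add, sum_sub_distrib, sum_add_distrib]
  simp [mul_comm]
  ring

lemma le_colSlack_iff (c : ι → ℕ) (d : ι → ι → ℕ) (m : ι → ℕ) (v : ι) (b : ℕ) :
    (b : ℤ) ≤ colSlack c d m v ↔ b + ∑ u, d u v * m u ≤ c v * m v := by
  rw [colSlack, le_sub_iff_add_le]
  norm_cast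

lemma exists_supersolution_of_row_weights (c : ι → ℕ) (d : ι → ι → ℕ) {x : ι → ℕ}
    (hx : ∀ u, ∑ v, d u v * x v < c u * x u) (b : ι → ℕ) :
    ∃ m : ι → ℕ, ∀ v, b v + ∑ u, d u v * m u ≤ c v * m v := by
  classical
  simp only [← le_colSlack_iff]
  -- raising `m` at a vertex with too little slack increases `Φ` by at least one,
  -- while `Φ` stays bounded as long as no slack reaches `b + c`
  let Φ (m : ι → ℕ) : ℤ := ∑ v, (x v : ℤ) * colSlack c d m v
  let Bound : ℤ := ∑ v, (x v : ℤ) * (b v + c v)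
  have hΦ {m : ι → ℕ} (hm : ∀ v, colSlack c d m v < b v + c v) : Φ m ≤ Bound :=
    sum_le_sum fun v _ => mul_le_mul_of_nonneg_left (hm v).le (by positivity)
  have hraise {m : ι → ℕ} (hm : ∀ v, colSlack c d m v < b v + c v) {v : ι}
      (hv : colSlack c d m v < b v) :
      (∀ w, colSlack c d (m + Pi.single v 1) w < b w + c w) ∧
        Φ m + 1 ≤ Φ (m + Pi.single v 1) := by
    refine ⟨fun w => ?_, ?_⟩
    · rw [colSlack_add_single]
      split_ifs with h
      · subst h; omega
      · have := hm w; omega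
    · simp only [Φ, sum_mul_colSlack_add_single]
      have := hx v
      linarith [show ((∑ w, d v w * x w : ℕ) : ℤ) + 1 ≤ (c v * x v : ℕ) from mod_cast this]
  have hc (v : ι) : 0 < c v := Nat.pos_of_ne_zero fun h => by simpa [h] using hx v
  suffices ∀ N : ℕ, ∀ m, (∀ v, colSlack c d m v < b v + c v) → Bound - Φ m ≤ N →
      ∃ m, ∀ v, (b v : ℤ) ≤ colSlack c d m v from
    this _ 0 (fun v => by simp [colSlack]; have := hc v; omega) (Int.self_le_toNat _)
  intro N
  induction N with
  | zero =>
    intro m hm hN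
    by_contra! hstuck
    obtain ⟨v, hv⟩ := hstuck m
    obtain ⟨hm', hinc⟩ := hraise hm hv
    push_cast at hN
    linarith [hΦ hm']
  | succ N ih =>
    intro m hm hN
    by_cases hdone : ∀ v, (b v : ℤ) ≤ colSlack c d m v
    · exact ⟨m, hdone⟩
    obtain ⟨v, hv⟩ := not_forall.mp hdone
    obtain ⟨hm', hinc⟩ := hraise hm (not_le.mp hv)
    exact ih _ hm' (by push_cast at hN ⊢; linarith)

lemma exists_nat_supersolution (c : ι → ℕ) (d : ι → ι → ℕ) (hrow : ∀ u, ∑ v, d u v ≤ c u)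
    (hleak : ∀ u, ∃ w, Relation.ReflTransGen (fun a b => 1 ≤ d a b) u w ∧ ∑ v, d w v < c w)
    (b : ι → ℕ) : ∃ m : ι → ℕ, ∀ v, b v + ∑ u, d u v * m u ≤ c v * m v :=
  have ⟨_, hx⟩ := exists_row_weights c d hrow hleak
  exists_supersolution_of_row_weights c d hx b

end Weights

section HitCount

variable {V E : Type} [DecidableEq V] (head : E → V) (next : E → E)

/-- How many of the first `n` firings of a vertex whose rotor starts at `e` send their chip to
`v`; a firing first advances the rotor, hence the `i + 1`. -/
def hitCount (e : E) (n : ℕ) (v : V) : ℕ :=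
  #{i ∈ range n | head (next^[i + 1] e) = v}

@[simp]
lemma hitCount_zero (e : E) (v : V) : hitCount head next e 0 v = 0 := rfl

lemma hitCount_add (e : E) (a b : ℕ) (v : V) :
    hitCount head next e (a + b) v =
      hitCount head next e a v + hitCount head next (next^[a] e) b v := by
  simp only [hitCount, card_filter, sum_range_add]
  congr 1
  refine sum_congr rfl fun i _ => ?_
  rw [← iterate_add_apply, show i + 1 + a = a + i + 1 by omega]

lemma hitCount_succ (e : E) (n : ℕ) (v : V) :
    hitCount head next e (n + 1) v =
      hitCount head next e n v + if head (next^[n + 1] e) = v then 1 else 0 := by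
  simp only [hitCount, card_filter, sum_range_succ]

lemma hitCount_le (e : E) (n : ℕ) (v : V) : hitCount head next e n v ≤ n :=
  (card_filter_le _ _).trans_eq (card_range n)

lemma hitCount_mono (e : E) {a b : ℕ} (h : a ≤ b) (v : V) :
    hitCount head next e a v ≤ hitCount head next e b v := by
  obtain ⟨c, rfl⟩ := Nat.exists_eq_add_of_le h
  rw [hitCount_add]
  exact Nat.le_add_right _ _

lemma hitCount_mul_period {e : E} {p : ℕ} (hp : IsPeriodicPt next p e) (k : ℕ) (v : V) :
    hitCount head next e (p * k) v = k * hitCount head next e p v := by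
  induction k with
  | zero => simp
  | succ k ih => rw [mul_add_one, hitCount_add, (hp.mul_const k).eq, ih, add_one_mul]

lemma hitCount_mul_add_le {e : E} {p : ℕ} (hp : IsPeriodicPt next p e) (m k : ℕ) (v : V) :
    hitCount head next e (p * m + k) v ≤ m * hitCount head next e p v + k := by
  rw [hitCount_add, hitCount_mul_period head next hp, (hp.mul_const m).eq]
  exact Nat.add_le_add_left (hitCount_le head next e k v) _

lemma sum_hitCount (e : E) (n : ℕ) (T : Finset V) :
    ∑ v ∈ T, hitCount head next e n v = #{i ∈ range n | head (next^[i + 1] e) ∈ T} := by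
  simp only [hitCount, card_filter]
  rw [sum_comm]
  exact sum_congr rfl fun i _ => sum_ite_eq T _ _

lemma sum_hitCount_univ [Fintype V] (e : E) (n : ℕ) :
    ∑ v, hitCount head next e n v = n := by
  simp [sum_hitCount]

lemma sum_hitCount_ne_add [Fintype V] (e : E) (n : ℕ) (s : V) :
    ∑ v : Vne s, hitCount head next e n v + hitCount head next e n s = n := by
  rw [add_comm, ← Fintype.sum_eq_add_sum_subtype_ne, sum_hitCount_univ]

lemma one_le_hitCount_of_isPeriodicPt {e e' : E} {p : ℕ} (hp : IsPeriodicPt next p e)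
    (hp0 : 0 < p) (he' : ∃ k, next^[k] e = e') : 1 ≤ hitCount head next e p (head e') := by
  obtain ⟨k, rfl⟩ := he'
  have hlast : 1 ≤ hitCount head next e (k + p) (head (next^[k] e)) := by
    obtain ⟨j, hj⟩ : ∃ j, k + p = j + 1 := ⟨k + p - 1, by omega⟩
    have hland : next^[j + 1] e = next^[k] e := by rw [← hj, iterate_add_apply, hp.eq]
    rw [hj, hitCount_succ, hland, if_pos rfl]
    exact Nat.le_add_left 1 _
  have := hlast.trans (hitCount_mono head next e (show k + p ≤ p * (k + 1) by nlinarith) _)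
  rw [hitCount_mul_period head next hp] at this
  exact Nat.pos_of_mul_pos_left this

end HitCount

section Odometer

lemma tail_iterate {V E : Type} {tail : E → V} {next : E → E}
    (hnext : ∀ e, tail (next e) = tail e) (k : ℕ) (e : E) : tail (next^[k] e) = tail e :=
  congrFun (iterate_invariant (funext hnext) k) e

def rotorsAfterFiring {V E : Type} {s : V} (tail : E → V) (next : E → E)
    (hnext : ∀ e, tail (next e) = tail e) (ρ : RotorConfig tail s) (t : Vne s → ℕ) :
    RotorConfig tail s :=
  ⟨fun v => next^[t v] (ρ.1 v), fun v => (tail_iterate hnext _ _).trans (ρ.2 v)⟩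

def chipsReceived {V E : Type} [Fintype V] [DecidableEq V] {s : V} (tail head : E → V)
    (next : E → E) (ρ : RotorConfig tail s) (t : Vne s → ℕ) (v : Vne s) : ℕ :=
  ∑ u, hitCount head next (ρ.1 u) (t u) v.1

/-- The chip counts use truncated subtraction: they are meaningful only while
`t ≤ σ + chipsReceived tail head next ρ t`. -/
def stateAfterFiring {V E : Type} [Fintype V] [DecidableEq V] {s : V} (tail head : E → V)
    (next : E → E) (hnext : ∀ e, tail (next e) = tail e) (σ : Vne s → ℕ)
    (ρ : RotorConfig tail s) (t : Vne s → ℕ) : CRState tail s :=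
  (fun v => σ v + chipsReceived tail head next ρ t v - t v, rotorsAfterFiring tail next hnext ρ t)

variable {V E : Type} [Fintype V] [DecidableEq V] {tail head : E → V} {next : E → E}
  {hnext : ∀ e, tail (next e) = tail e} {s : V}

lemma chipsReceived_add_single (ρ : RotorConfig tail s) (t : Vne s → ℕ) (v u : Vne s) :
    chipsReceived tail head next ρ (t + Pi.single v 1) u =
      chipsReceived tail head next ρ t u +
        if head (next^[t v + 1] (ρ.1 v)) = u.1 then 1 else 0 := by
  simp only [chipsReceived, Pi.add_apply, Pi.single_apply]
  rw [← sum_erase_add _ _ (mem_univ v), ← sum_erase_add _ _ (mem_univ v), if_pos rfl,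
    hitCount_succ, add_assoc]
  congr 1
  exact sum_congr rfl fun w hw => by rw [if_neg (ne_of_mem_erase hw), add_zero]

lemma crFire_stateAfterFiring (σ : Vne s → ℕ) (ρ : RotorConfig tail s) (t : Vne s → ℕ)
    (hchips : ∀ u, t u ≤ σ u + chipsReceived tail head next ρ t u) {v : Vne s}
    (hv : t v < σ v + chipsReceived tail head next ρ t v) :
    crFire tail head next hnext (stateAfterFiring tail head next hnext σ ρ t) v =
      stateAfterFiring tail head next hnext σ ρ (t + Pi.single v 1) := by
  refine Prod.ext (funext fun u => ?_) (Subtype.ext (funext fun u => ?_))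
  · simp only [crFire, stateAfterFiring, chipsReceived_add_single, rotorsAfterFiring,
      ← iterate_succ_apply' next, Pi.add_apply, Pi.single_apply, eq_comm (a := u.1)]
    have := hchips u
    split_ifs with huv <;> (try subst huv) <;> omega
  · simp only [crFire, stateAfterFiring, rotorsAfterFiring, Pi.add_apply, Pi.single_apply]
    rcases eq_or_ne u v with rfl | huv
    · rw [update_self, if_pos rfl, iterate_succ_apply']
    · rw [update_of_ne huv, if_neg huv, add_zero]

lemma RAcyclic.exists_head_notMem {ρ : RotorConfig tail s} (hρ : RAcyclic tail head s ρ)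
    {U : Finset (Vne s)} (hU : U.Nonempty) : ∃ u ∈ U, ∀ w ∈ U, head (ρ.1 u) ≠ w.1 := by
  by_contra! hclosed
  obtain ⟨u₀, hu₀⟩ := hU
  set f := rotorSucc tail head s ρ
  have hstay (i : ℕ) : ∃ w ∈ U, f^[i] u₀.1 = w.1 := by
    induction i with
    | zero => exact ⟨u₀, hu₀, rfl⟩
    | succ i ih =>
      obtain ⟨w, hw, hi⟩ := ih
      obtain ⟨w', hw', hww'⟩ := hclosed w hw
      exact ⟨w', hw', by rw [iterate_succ_apply', hi, ← hww']; exact dif_neg w.2⟩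
  obtain ⟨i, j, hij, hfij⟩ := Finite.exists_ne_map_eq_of_infinite fun i => f^[i] u₀.1
  wlog hlt : i < j generalizing i j
  · exact this j i hij.symm hfij.symm (by omega)
  obtain ⟨w, -, hw⟩ := hstay i
  refine hρ w (j - i) (by omega) ?_
  rw [← hw, ← iterate_add_apply, Nat.sub_add_cancel hlt.le]
  exact hfij.symm

lemma exists_unfinished_eq_head_of_unfinished_empty (ρ : RotorConfig tail s) {σ n t : Vne s → ℕ}
    (hσ : ∀ v, σ v + chipsReceived tail head next ρ n v = n v) (ht : t ≤ n)
    (hempty : ∀ v, t v < n v → σ v + chipsReceived tail head next ρ t v = t v)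
    {u : Vne s} (hu : t u < n u) : ∃ w, t w < n w ∧ head (next^[n u] (ρ.1 u)) = w.1 := by
  classical
  set U : Finset (Vne s) := {v | t v < n v}
  set rest : Vne s → ℕ := fun w => n w - t w
  set e : Vne s → E := fun w => next^[t w] (ρ.1 w)
  -- as the unfinished vertices are empty, every remaining firing must send its chip into `U`
  set intoU : Vne s → ℕ :=
    fun w => #{i ∈ range (rest w) | head (next^[i + 1] (e w)) ∈ U.map (Embedding.subtype _)}
  have hreceived (v : Vne s) : chipsReceived tail head next ρ n v =
      chipsReceived tail head next ρ t v + ∑ w, hitCount head next (e w) (rest w) v.1 := by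
    simp only [chipsReceived, ← sum_add_distrib]
    exact sum_congr rfl fun w _ => by rw [← hitCount_add, Nat.add_sub_cancel' (ht w)]
  have hinflow (v : Vne s) (hv : v ∈ U) :
      ∑ w, hitCount head next (e w) (rest w) v.1 = rest v := by
    have := hσ v
    have := hempty v (mem_filter.mp hv).2
    have := hreceived v
    show _ = n v - t v
    omega
  have hcount : ∑ w, intoU w = ∑ w, rest w :=
    calc ∑ w, intoU w = ∑ w, ∑ v ∈ U, hitCount head next (e w) (rest w) v.1 := by
          simp only [intoU, ← sum_hitCount, sum_map, Embedding.coe_subtype]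
      _ = ∑ v ∈ U, rest v := by rw [sum_comm]; exact sum_congr rfl hinflow
      _ = ∑ w, rest w := sum_filter_of_ne fun w _ hw => by simp only [rest] at hw; omega
  have hintoU : intoU u = rest u :=
    (sum_eq_sum_iff_of_le fun w _ => (card_filter_le _ _).trans_eq (card_range _)).mp hcount u
      (mem_univ u)
  have hlast := card_filter_eq_iff.mp (hintoU.trans (card_range _).symm) (rest u - 1)
    (mem_range.mpr (by simp only [rest]; omega))
  rw [← iterate_add_apply, show rest u - 1 + 1 + t u = n u by simp only [rest]; omega] at hlast
  obtain ⟨w, hw, hw'⟩ := mem_map.mp hlast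
  exact ⟨w, (mem_filter.mp hw).2, hw'.symm⟩

lemma exists_unfinished_with_chip {ρ ρ' : RotorConfig tail s} (hρ' : RAcyclic tail head s ρ')
    {σ n t : Vne s → ℕ} (hσ : ∀ v, σ v + chipsReceived tail head next ρ n v = n v)
    (hn : ∀ v, next^[n v] (ρ.1 v) = ρ'.1 v) (ht : t ≤ n)
    (hchips : ∀ v, t v ≤ σ v + chipsReceived tail head next ρ t v) (htn : t ≠ n) :
    ∃ v, t v < n v ∧ t v < σ v + chipsReceived tail head next ρ t v := by
  classical
  by_contra! hempty
  obtain ⟨v, hv⟩ := ne_iff.mp htn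
  obtain ⟨u, hu, hhead⟩ := hρ'.exists_head_notMem (U := {v | t v < n v})
    ⟨v, mem_filter.mpr ⟨mem_univ v, (ht v).lt_of_ne hv⟩⟩
  obtain ⟨w, hw, hw'⟩ := exists_unfinished_eq_head_of_unfinished_empty ρ hσ ht
    (fun v hv => (hempty v hv).antisymm (hchips v)) (mem_filter.mp hu).2
  exact hhead w (mem_filter.mpr ⟨mem_univ w, hw⟩) (hn u ▸ hw')

lemma exists_legal_firing_of_le {ρ ρ' : RotorConfig tail s} (hρ' : RAcyclic tail head s ρ')
    {σ n : Vne s → ℕ} (hσ : ∀ v, σ v + chipsReceived tail head next ρ n v = n v)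
    (hn : ∀ v, next^[n v] (ρ.1 v) = ρ'.1 v) {t : Vne s → ℕ} (ht : t ≤ n)
    (hchips : ∀ v, t v ≤ σ v + chipsReceived tail head next ρ t v) :
    ∃ l, crLegal tail head next hnext (stateAfterFiring tail head next hnext σ ρ t) l ∧
      crFireList tail head next hnext (stateAfterFiring tail head next hnext σ ρ t) l =
        stateAfterFiring tail head next hnext σ ρ n := by
  induction hrest : ∑ v, (n v - t v) generalizing t with
  | zero =>
    obtain rfl : t = n := funext fun v => by
      have := (sum_eq_zero_iff.mp hrest) v (mem_univ v)
      have : t v ≤ n v := ht v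
      omega
    exact ⟨[], trivial, rfl⟩
  | succ N ih =>
    obtain ⟨v, hvn, hv⟩ := exists_unfinished_with_chip hρ' hσ hn ht hchips
      (by rintro rfl; simp at hrest)
    have ht' : t + Pi.single v 1 ≤ n := fun u => by
      simp only [Pi.add_apply, Pi.single_apply]
      split_ifs with huv
      · exact huv ▸ hvn
      · exact ht u
    have hchips' (u : Vne s) : (t + Pi.single v 1 : Vne s → ℕ) u ≤
        σ u + chipsReceived tail head next ρ (t + Pi.single v 1) u := by
      simp only [chipsReceived_add_single, Pi.add_apply, Pi.single_apply]
      have := hchips u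
      split_ifs with huv <;> (try subst huv) <;> omega
    have hrest' : ∑ u, (n u - (t + Pi.single v 1 : Vne s → ℕ) u) = N := by
      rw [← sum_erase_add _ _ (mem_univ v)] at hrest ⊢
      rw [sum_congr rfl fun u hu => by rw [Pi.add_apply, Pi.single_eq_of_ne (ne_of_mem_erase hu),
        add_zero], Pi.add_apply, Pi.single_eq_same]
      omega
    obtain ⟨l, hl, hfin⟩ := ih ht' hchips' hrest'
    have hfire := crFire_stateAfterFiring (hnext := hnext) σ ρ t hchips hv
    refine ⟨v :: l, ⟨?_, ?_⟩, ?_⟩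
    · show 1 ≤ σ v + chipsReceived tail head next ρ t v - t v
      omega
    · rwa [hfire]
    · simp only [crFireList, hfire, hfin]

lemma routesAll_of_odometer {ρ ρ' : RotorConfig tail s} (hρ' : RAcyclic tail head s ρ')
    {n : Vne s → ℕ} (hn : ∀ v, next^[n v] (ρ.1 v) = ρ'.1 v)
    (hbal : ∀ v, chipsReceived tail head next ρ n v ≤ n v) :
    RoutesAll tail head next hnext (fun v => n v - chipsReceived tail head next ρ n v) ρ ρ' := by
  set σ := fun v => n v - chipsReceived tail head next ρ n v
  have hσ (v : Vne s) : σ v + chipsReceived tail head next ρ n v = n v := by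
    have := hbal v
    simp only [σ]
    omega
  have hstart : stateAfterFiring tail head next hnext σ ρ 0 = (σ, ρ) := by
    refine Prod.ext (funext fun v => ?_) rfl
    simp [stateAfterFiring, chipsReceived, hitCount_zero]
  obtain ⟨l, hl, hfin⟩ := exists_legal_firing_of_le (hnext := hnext) (t := 0) hρ' hσ hn
    (fun v => Nat.zero_le (n v)) fun v => Nat.zero_le _
  rw [hstart] at hl hfin
  refine ⟨l, hl, fun v => ?_, ?_⟩
  · rw [hfin]
    show σ v + chipsReceived tail head next ρ n v - n v = 0
    rw [hσ, Nat.sub_self]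
  · rw [hfin]
    exact Subtype.ext (funext hn)

end Odometer

lemma exists_reflTransGen_leak {V E : Type} [Fintype V] [DecidableEq V] {tail head : E → V}
    {next : E → E} {s : V} (hcyc : ∀ e e' : E, tail e = tail e' → ∃ k, next^[k] e = e')
    (ρ : RotorConfig tail s) {p : Vne s → ℕ} (hp : ∀ v, IsPeriodicPt next (p v) (ρ.1 v))
    (hp0 : ∀ v, 0 < p v) {a : V}
    (has : Relation.ReflTransGen (fun a b => ∃ e, tail e = a ∧ head e = b) a s) (ha : a ≠ s) :
    ∃ w, Relation.ReflTransGen (fun u v : Vne s => 1 ≤ hitCount head next (ρ.1 u) (p u) v.1)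
      ⟨a, ha⟩ w ∧ ∑ v : Vne s, hitCount head next (ρ.1 w) (p w) v.1 < p w := by
  have hhit (u : Vne s) {e : E} (he : tail e = u.1) :
      1 ≤ hitCount head next (ρ.1 u) (p u) (head e) :=
    one_le_hitCount_of_isPeriodicPt head next (hp u) (hp0 u) (hcyc _ _ ((ρ.2 u).trans he.symm))
  induction has using Relation.ReflTransGen.head_induction_on with
  | refl => exact absurd rfl ha
  | head hab _ ih =>
    obtain ⟨e, rfl, rfl⟩ := hab
    by_cases hb : head e = s
    · refine ⟨⟨tail e, ha⟩, .refl, ?_⟩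
      have := sum_hitCount_ne_add head next (ρ.1 ⟨tail e, ha⟩) (p ⟨tail e, ha⟩) s
      have := hhit ⟨tail e, ha⟩ rfl
      rw [hb] at this
      omega
    · obtain ⟨w, hw, hleak⟩ := ih hb
      exact ⟨w, .head (hhit ⟨tail e, ha⟩ rfl) hw, hleak⟩

theorem sandpile_action_transitive_general
    {V E : Type} [Fintype V] [DecidableEq V]
    (tail head : E → V) (next : E → E)
    (hnext : ∀ e, tail (next e) = tail e)
    (hcyc : ∀ e e' : E, tail e = tail e' → ∃ k, next^[k] e = e')
    (s : V)
    (hglobal : ∀ v : V,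
      Relation.ReflTransGen (fun a b => ∃ e, tail e = a ∧ head e = b) v s)
    (ρ ρ' : RotorConfig tail s)
    (hρ' : RAcyclic tail head s ρ') :
    ∃ σ : Vne s → ℕ, RoutesAll tail head next hnext σ ρ ρ' := by
  have hperiodic (e : E) : ∃ p, 0 < p ∧ IsPeriodicPt next p e :=
    have ⟨q, hq⟩ := hcyc (next e) e (hnext e)
    ⟨q + 1, q.succ_pos, by rw [IsPeriodicPt, IsFixedPt, iterate_succ_apply, hq]⟩
  choose p hp0 hper using fun v : Vne s => hperiodic (ρ.1 v)
  choose k hk using fun v : Vne s => hcyc (ρ.1 v) (ρ'.1 v) ((ρ.2 v).trans (ρ'.2 v).symm)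
  obtain ⟨m, hm⟩ := exists_nat_supersolution p (fun u v => hitCount head next (ρ.1 u) (p u) v.1)
    (fun u => by have := sum_hitCount_ne_add head next (ρ.1 u) (p u) s; omega)
    (fun u => exists_reflTransGen_leak hcyc ρ hper hp0 (hglobal u.1) u.2) fun _ => ∑ u, k u
  refine ⟨_, routesAll_of_odometer hρ' (n := fun v => p v * m v + k v) (fun v => ?_) fun v => ?_⟩
  · rw [add_comm, iterate_add_apply, ((hper v).mul_const (m v)).eq, hk]
  · calc chipsReceived tail head next ρ (fun v => p v * m v + k v) v
        ≤ ∑ u, (m u * hitCount head next (ρ.1 u) (p u) v.1 + k u) :=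
          sum_le_sum fun u _ => hitCount_mul_add_le head next (hper u) _ _ _
      _ ≤ p v * m v + k v := by
          have := hm v
          rw [sum_add_distrib]
          simp only [mul_comm (m _)]
          omega

/-- **Transitivity.**  Let `G` be a digraph with a global sink.  For any two acyclic
rotor configurations `ρ` and `ρ'` on `G`, there exists a chip configuration `σ` with
`σ(ρ) = ρ'`: adding `σ(v)` chips at each non-sink vertex `v` and routing them all to
the sink turns `ρ` into `ρ'`. -/
theorem sandpile_action_transitive
    {V E : Type} [Fintype V] [DecidableEq V] [Fintype E]
    (tail head : E → V) (next : E → E)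
    (hnext : ∀ e, tail (next e) = tail e)
    (hcyc : ∀ e e' : E, tail e = tail e' → ∃ k, next^[k] e = e')
    (s : V) (hs : outdeg tail s = 0)
    (hglobal : ∀ v : V,
      Relation.ReflTransGen (fun a b => ∃ e, tail e = a ∧ head e = b) v s)
    (ρ ρ' : RotorConfig tail s)
    (hρ : RAcyclic tail head s ρ) (hρ' : RAcyclic tail head s ρ') :
    ∃ σ : Vne s → ℕ, RoutesAll tail head next hnext σ ρ ρ' :=
  sandpile_action_transitive_general tail head next hnext hcyc s hglobal ρ ρ' hρ'
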